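/- Let M₁ and M₂ be nonsingular 2×2 integer matrices and let 𝒮₁ ⊆ GL(2,ℤ) be a regular subset. Then the set {A ∈ GL(2,ℤ) : there exists A₁ ∈ 𝒮₁ with A₁ · M₁ · A = M₂} is a regular subset of GL(2,ℤ). -/

import Mathlib

/-- 2×2 integer matrices. -/
abbrev M2 := Matrix (Fin 2) (Fin 2) ℤ

/-- A matrix belongs to GL(2,ℤ), i.e. has determinant ±1. -/
def IsGL (A : M2) : Prop := A.det = 1 ∨ A.det = -1

/-- The four-letter alphabet Σ = {X, N, S, R}. -/
inductive Alph : Type | X | N | S | R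
deriving DecidableEq

instance instFintypeAlph : Fintype Alph :=
  ⟨{Alph.X, Alph.N, Alph.S, Alph.R}, by intro x; cases x <;> decide⟩

/-- The matrices assigned to letters of Σ. -/
def phiLetter : Alph → M2
  | Alph.X => !![-1, 0; 0, -1]
  | Alph.N => !![1, 0; 0, -1]
  | Alph.S => !![0, -1; 1, 0]
  | Alph.R => !![0, -1; 1, 1]

/-- The monoid homomorphism φ : Σ* → GL(2,ℤ) (valued in matrices). -/
def phi (w : List Alph) : M2 := (w.map phiLetter).prod

/-- A word over Σ is canonical: no subword SS or RRR, the letter N occurs only in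
the first position, and X occurs only in the first position or immediately after N. -/
def Canonical (w : List Alph) : Prop :=
  ¬ [Alph.S, Alph.S] <:+: w ∧
  ¬ [Alph.R, Alph.R, Alph.R] <:+: w ∧
  (∀ i : Fin w.length, w.get i = Alph.N → (i : ℕ) = 0) ∧
  (∀ i : Fin w.length, w.get i = Alph.X →
      (i : ℕ) = 0 ∨ ((i : ℕ) = 1 ∧ w.get ⟨0, Nat.lt_of_le_of_lt (Nat.zero_le _) i.isLt⟩ = Alph.N))

/-- A subset of GL(2,ℤ) is regular if it is the image under φ of a regular language. -/
def RegularSubset (S : Set M2) : Prop :=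
  ∃ L : Language Alph, L.IsRegular ∧ phi '' L = S

/-!
Let `A₁ = φ(w)`. An `A` with `A₁ * M₁ * A = M₂` must be `M₁⁻¹ * A₁⁻¹ * M₂`, and whether this matrix
lies in GL(2,ℤ) depends only on `A₁⁻¹` modulo `m = |det M₁|`. A finite transducer reads `w`
backwards; its state `q` is the inverse of the suffix read so far, modulo `m`. On a letter `a` it
emits a word for `M₁⁻¹ * s * M₁`, where `s = rep q * a⁻¹ * (rep (q * a⁻¹))⁻¹` for a fixed lift
`rep q ∈ GL(2,ℤ)` of `q`; as `s ≡ 1` modulo `m`, `M₁⁻¹ * s * M₁` is integral. At the end it emits a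
word for `M₁⁻¹ * rep q * M₂`, and the output telescopes to `M₁⁻¹ * A₁⁻¹ * M₂`. Images of regular
languages under finite transducers are regular.
-/

open Matrix

section LabelledAutomaton

variable {β σ : Type*}

inductive LabelPath (T : σ → List β → σ → Prop) : σ → List β → σ → Prop
  | nil (s : σ) : LabelPath T s [] s
  | cons {s t r : σ} {u x : List β} : T s u t → LabelPath T t x r → LabelPath T s (u ++ x) r

variable (T : σ → List β → σ → Prop) (B : ℕ)

/-- Reads the label of a transition one letter at a time; the second component of a state is the
part of the current label that is still to be read. -/
def labelNFA (S F : Set σ) : εNFA β (σ × {l : List β // l.length ≤ B}) where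
  step p
    | none => {p' | p.2.1 = [] ∧ T p.1 p'.2.1 p'.1}
    | some b => {p' | p'.1 = p.1 ∧ p.2.1 = b :: p'.2.1}
  start := {p | p.1 ∈ S ∧ p.2.1 = []}
  accept := {p | p.1 ∈ F ∧ p.2.1 = []}

variable {T B}

theorem labelNFA_isPath_drain (S F : Set σ) (s : σ) (u : List β) (hu : u.length ≤ B) :
    (labelNFA T B S F).IsPath (s, ⟨u, hu⟩) (s, ⟨[], Nat.zero_le B⟩) (u.map some) := by
  induction u with
  | nil => exact .nil _
  | cons b u ih =>
    exact .cons (s, ⟨u, (Nat.le_succ _).trans hu⟩) _ _ _ _ ⟨rfl, rfl⟩ (ih _)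

theorem LabelPath.of_labelNFA_isPath {S F : Set σ} {p p' : σ × {l : List β // l.length ≤ B}}
    {x : List (Option β)} (h : (labelNFA T B S F).IsPath p p' x) (hp' : p'.2.1 = []) :
    ∃ y, x.reduceOption = p.2.1 ++ y ∧ LabelPath T p.1 y p'.1 := by
  induction h with
  | nil p => exact ⟨[], by simp [hp'], .nil _⟩
  | cons t p p' a x hstep _ ih =>
    obtain ⟨y, hy, hpath⟩ := ih hp'
    cases a with
    | none =>
      obtain ⟨hp, hT⟩ := hstep
      exact ⟨t.2.1 ++ y, by simpa [hp] using hy, .cons hT hpath⟩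
    | some b =>
      obtain ⟨ht, hp⟩ := hstep
      exact ⟨y, by simp [hy, hp], ht ▸ hpath⟩

theorem LabelPath.exists_labelNFA_isPath (hB : ∀ s u t, T s u t → u.length ≤ B) (S F : Set σ)
    {s t : σ} {y : List β} (h : LabelPath T s y t) :
    ∃ x, x.reduceOption = y ∧
      (labelNFA T B S F).IsPath (s, ⟨[], Nat.zero_le B⟩) (t, ⟨[], Nat.zero_le B⟩) x := by
  induction h with
  | nil s => exact ⟨[], rfl, .nil _⟩
  | @cons s t r u y hT _ ih =>
    obtain ⟨x, hx, hpath⟩ := ih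
    refine ⟨none :: (u.map some ++ x), ?_, .cons (t, ⟨u, hB _ _ _ hT⟩) _ _ _ _ ⟨rfl, hT⟩ ?_⟩
    · simp [← hx, List.reduceOption, List.filterMap_map]
    · exact (εNFA.isPath_append _).2 ⟨_, labelNFA_isPath_drain S F t u _, hpath⟩

theorem isRegular_labelPath [Finite σ] [Finite β] (hB : ∀ s u t, T s u t → u.length ≤ B)
    (S F : Set σ) : Language.IsRegular {y : List β | ∃ s ∈ S, ∃ t ∈ F, LabelPath T s y t} := by
  have : Finite {l : List β // l.length ≤ B} := (List.finite_length_le β B).to_subtype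
  refine Language.isRegular_iff.2 ⟨_, Fintype.ofFinite _, (labelNFA T B S F).toNFA.toDFA, ?_⟩
  ext y
  simp only [NFA.toDFA_correct, εNFA.toNFA_correct, εNFA.mem_accepts_iff_exists_path]
  constructor
  · rintro ⟨p, p', x, ⟨hpS, hp⟩, ⟨hp'F, hp'⟩, rfl, hpath⟩
    obtain ⟨y, hy, hlabel⟩ := LabelPath.of_labelNFA_isPath hpath hp'
    exact ⟨p.1, hpS, p'.1, hp'F, by simpa [hy, hp] using hlabel⟩
  · rintro ⟨s, hs, t, ht, hlabel⟩
    obtain ⟨x, hx, hpath⟩ := hlabel.exists_labelNFA_isPath hB S F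
    exact ⟨_, _, x, ⟨hs, rfl⟩, ⟨ht, rfl⟩, hx, hpath⟩

end LabelledAutomaton

section Transducer

variable {α β σ τ : Type*}

def transduce (M : DFA α σ) (out : σ → α → List β) (fin : σ → List β) : σ → List α → List β
  | s, [] => fin s
  | s, a :: w => out s a ++ transduce M out fin (M.step s a) w

variable (N : DFA α τ) (M : DFA α σ) (out : σ → α → List β) (fin : σ → List β)

/-- The transitions of `M` run alongside `N`, labelled by the output of `M`; a final transition to
`none` emits the final output and is only allowed from accepting states of `N`. -/
def transduceStep : Option (τ × σ) → List β → Option (τ × σ) → Prop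
  | some (n, s), u, some (n', s') => ∃ a, n' = N.step n a ∧ s' = M.step s a ∧ u = out s a
  | some (n, s), u, none => n ∈ N.accept ∧ u = fin s
  | none, _, _ => False

variable {N M out fin}

theorem labelPath_transduceStep_iff {n : τ} {s : σ} {x : List β} :
    LabelPath (transduceStep N M out fin) (some (n, s)) x none ↔
      ∃ w, N.evalFrom n w ∈ N.accept ∧ transduce M out fin s w = x := by
  constructor
  · generalize hp : some (n, s) = p
    generalize hr : (none : Option (τ × σ)) = r
    intro h
    induction h generalizing n s with
    | nil => cases hp; cases hr
    | @cons p t r u x hT hpath ih =>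
      subst hp
      match t, hT with
      | none, ⟨hn, hu⟩ =>
        cases hpath with
        | nil => exact ⟨[], hn, by simp [transduce, hu]⟩
        | cons hT' _ => exact hT'.elim
      | some (n', s'), ⟨a, hn', hs', hu⟩ =>
        obtain ⟨w, hw, rfl⟩ := ih (n := n') (s := s') rfl hr
        exact ⟨a :: w, by simpa [hn'] using hw, by simp [transduce, hu, hs']⟩
  · rintro ⟨w, hw, rfl⟩
    induction w generalizing n s with
    | nil => simpa [transduce] using LabelPath.cons (r := none) ⟨hw, rfl⟩ (.nil _)
    | cons a w ih => exact .cons (t := some (N.step n a, M.step s a)) ⟨a, rfl, rfl, rfl⟩ (ih hw)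

theorem Language.IsRegular.image_transduce [Finite α] [Finite β] [Finite σ] {L : Language α}
    (hL : L.IsRegular) (M : DFA α σ) (out : σ → α → List β) (fin : σ → List β) (s : σ) :
    Language.IsRegular (transduce M out fin s '' L) := by
  obtain ⟨τ, _, N, rfl⟩ := hL
  obtain ⟨B₁, hB₁⟩ := (Set.finite_range fun p : σ × α => (out p.1 p.2).length).bddAbove
  obtain ⟨B₂, hB₂⟩ := (Set.finite_range fun s => (fin s).length).bddAbove
  have hB : ∀ p u r, transduceStep N M out fin p u r → u.length ≤ max B₁ B₂ := by
    rintro (_ | ⟨n, s⟩) u (_ | ⟨n', s'⟩) h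
    · exact h.elim
    · exact h.elim
    · exact h.2 ▸ le_max_of_le_right (hB₂ ⟨s, rfl⟩)
    · obtain ⟨a, -, -, rfl⟩ := h
      exact le_max_of_le_left (hB₁ ⟨(s, a), rfl⟩)
  have hL : transduce M out fin s '' N.accepts =
      {x | ∃ p ∈ ({some (N.start, s)} : Set _), ∃ r ∈ ({none} : Set _),
        LabelPath (transduceStep N M out fin) p x r} := by
    ext x
    simp only [Set.mem_singleton_iff, exists_eq_left, labelPath_transduceStep_iff]
    rfl
  rw [hL]
  exact isRegular_labelPath hB _ _

end Transducer

section IntegerMatrices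

variable {n : Type*} [Fintype n] [DecidableEq n]

theorem Matrix.mul_left_cancel_of_det_ne_zero {R : Type*} [CommRing R] [IsDomain R]
    {M X Y : Matrix n n R} (hM : M.det ≠ 0) (h : M * X = M * Y) : X = Y := by
  have h' := congrArg (M.adjugate * ·) h
  simp only [← mul_assoc, adjugate_mul, smul_mul, one_mul] at h'
  exact smul_right_injective _ hM h'

theorem isUnit_of_mul_eq_mul_of_isUnit {R : Type*} [CommRing R] [IsDomain R]
    {M N C C' Y Y' : Matrix n n R} (hM : M.det ≠ 0) (hC' : IsUnit C') (hY : IsUnit Y)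
    (h : M * Y = C * N) (h' : M * Y' = C' * N) : IsUnit Y' := by
  rw [isUnit_iff_isUnit_det] at hC' hY ⊢
  have e := congrArg det h
  have e' := congrArg det h'
  simp only [det_mul] at e e'
  have : Y'.det * C.det = C'.det * Y.det :=
    mul_left_cancel₀ hM (by linear_combination C.det * e' - C'.det * e)
  exact isUnit_of_mul_isUnit_left (this ▸ hC'.mul hY)

def reduceModDet (M : Matrix n n ℤ) : Matrix n n ℤ →+* Matrix n n (ZMod M.det.natAbs) :=
  (Int.castRingHom _).mapMatrix

theorem exists_eq_add_det_smul_of_reduceModDet_eq {M C C' : Matrix n n ℤ}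
    (h : reduceModDet M C = reduceModDet M C') : ∃ K, C' = C + M.det • K := by
  refine ⟨Matrix.of fun i j => (C' i j - C i j) / M.det, ?_⟩
  ext i j
  have hdvd : M.det ∣ C' i j - C i j := by
    rw [← Int.natAbs_dvd, ← ZMod.intCast_eq_intCast_iff_dvd_sub]
    exact congrFun (congrFun h i) j
  simp [Int.mul_ediv_cancel' hdvd]

theorem exists_isUnit_mul_eq_of_reduceModDet_eq {M N C C' : Matrix n n ℤ} (hM : M.det ≠ 0)
    (hC' : IsUnit C') (hCC' : reduceModDet M C = reduceModDet M C')
    (hY : ∃ Y, IsUnit Y ∧ M * Y = C * N) : ∃ Y, IsUnit Y ∧ M * Y = C' * N := by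
  obtain ⟨Y, hYu, hY⟩ := hY
  obtain ⟨K, rfl⟩ := exists_eq_add_det_smul_of_reduceModDet_eq hCC'
  have h : M * (Y + M.adjugate * K * N) = (C + M.det • K) * N := by
    rw [mul_add, hY, ← mul_assoc, ← mul_assoc, mul_adjugate, smul_mul, one_mul, add_mul, smul_mul]
  exact ⟨_, isUnit_of_mul_eq_mul_of_isUnit hM hC' hYu hY h, h⟩

end IntegerMatrices

section Words

open Alph

theorem phi_nil : phi [] = 1 := rfl

theorem phi_cons (a : Alph) (w : List Alph) : phi (a :: w) = phiLetter a * phi w := by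
  simp [phi]

theorem phi_append (u v : List Alph) : phi (u ++ v) = phi u * phi v := by
  simp [phi]

theorem isGL_iff_isUnit {A : M2} : IsGL A ↔ IsUnit A := by
  rw [isUnit_iff_isUnit_det, Int.isUnit_iff, IsGL]

theorem isUnit_phi (w : List Alph) : IsUnit (phi w) := by
  refine List.prod_isUnit fun A hA => ?_
  obtain ⟨a, -, rfl⟩ := List.mem_map.1 hA
  rw [← isGL_iff_isUnit]
  cases a <;> simp [IsGL, phiLetter, det_fin_two_of]

theorem exists_phi_eq_coe (g : SpecialLinearGroup (Fin 2) ℤ) : ∃ w, phi w = g := by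
  have hg : g ∈ Subgroup.closure {ModularGroup.S, ModularGroup.T} := by
    rw [SpecialLinearGroup.SL2Z_generators]; trivial
  induction hg using Subgroup.closure_induction'' with
  | mem g hg =>
    rcases hg with rfl | rfl
    · exact ⟨[S], by decide⟩
    · exact ⟨[X, S, R], by decide⟩
  | inv_mem g hg =>
    rcases hg with rfl | rfl
    · exact ⟨[X, S], by rw [ModularGroup.S_inv]; decide⟩
    · exact ⟨[X, R, R, S], by rw [ModularGroup.coe_T_inv]; decide⟩
  | one => exact ⟨[], rfl⟩
  | mul g h _ _ hg hh =>
    obtain ⟨u, hu⟩ := hg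
    obtain ⟨v, hv⟩ := hh
    exact ⟨u ++ v, by rw [phi_append, hu, hv]; rfl⟩

theorem exists_phi_eq {A : M2} (hA : IsUnit A) : ∃ w, phi w = A := by
  rcases isGL_iff_isUnit.2 hA with hA | hA
  · exact exists_phi_eq_coe ⟨A, hA⟩
  · obtain ⟨w, hw⟩ := exists_phi_eq_coe ⟨phiLetter N * A, by
      rw [det_mul, hA]; simp [phiLetter, det_fin_two_of]⟩
    refine ⟨N :: w, ?_⟩
    rw [phi_cons, hw, ← mul_assoc, show phiLetter N * phiLetter N = 1 by decide, one_mul]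

def invWord : Alph → List Alph
  | X => [X]
  | N => [N]
  | S => [X, S]
  | R => [X, R, R]

theorem phi_invWord (a : Alph) : phi (invWord a) = (phiLetter a)⁻¹ := by
  cases a <;> exact (inv_eq_left_inv (by decide)).symm

theorem phi_flatMap_invWord_reverse (w : List Alph) :
    phi (w.reverse.flatMap invWord) = (phi w)⁻¹ := by
  induction w with
  | nil => simp [phi_nil]
  | cons a w ih =>
    simp [List.flatMap_append, phi_append, ih, phi_cons, Matrix.mul_inv_rev, phi_invWord]

open Classical in
noncomputable def chooseWord (P : M2 → Prop) : List Alph :=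
  if h : ∃ w, P (phi w) then h.choose else []

theorem chooseWord_spec {P : M2 → Prop} (h : ∃ A, IsUnit A ∧ P A) : P (phi (chooseWord P)) := by
  obtain ⟨A, hA, hP⟩ := h
  obtain ⟨w, rfl⟩ := exists_phi_eq hA
  have h : ∃ w, P (phi w) := ⟨w, hP⟩
  rw [chooseWord, dif_pos h]
  exact h.choose_spec

end Words

section Schreier

variable (M₁ M₂ : M2)

local notation "Q" => Matrix (Fin 2) (Fin 2) (ZMod M₁.det.natAbs)

open Classical in
noncomputable def cosetRep (q : Q) : M2 :=
  if q = 1 then 1 else phi (chooseWord fun A => reduceModDet M₁ A = q)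

def schreierDFA : DFA Alph Q where
  step q a := q * reduceModDet M₁ (phi (invWord a))
  start := 1
  accept := {q | ∃ Y, IsUnit Y ∧ M₁ * Y = cosetRep M₁ q * M₂}

noncomputable def schreierOut (q : Q) (a : Alph) : List Alph :=
  chooseWord fun Y => M₁ * Y =
    cosetRep M₁ q * phi (invWord a) * (cosetRep M₁ ((schreierDFA M₁ M₂).step q a))⁻¹ * M₁

noncomputable def schreierFin (q : Q) : List Alph :=
  chooseWord fun Y => M₁ * Y = cosetRep M₁ q * M₂

variable {M₁ M₂}

theorem isUnit_cosetRep (q : Q) : IsUnit (cosetRep M₁ q) := by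
  unfold cosetRep
  split_ifs
  exacts [isUnit_one, isUnit_phi _]

theorem reduceModDet_cosetRep {q : Q} (hq : ∃ w, reduceModDet M₁ (phi w) = q) :
    reduceModDet M₁ (cosetRep M₁ q) = q := by
  obtain ⟨w, hw⟩ := hq
  unfold cosetRep
  split_ifs with h
  · rw [map_one, h]
  · exact chooseWord_spec (P := fun A => reduceModDet M₁ A = q) ⟨_, isUnit_phi w, hw⟩

theorem schreierDFA_evalFrom (q : Q) (u : List Alph) :
    (schreierDFA M₁ M₂).evalFrom q u = q * reduceModDet M₁ (phi (u.flatMap invWord)) := by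
  induction u generalizing q with
  | nil => simp [phi_nil]
  | cons a u ih =>
    rw [DFA.evalFrom_cons, ih, List.flatMap_cons, phi_append, map_mul, ← mul_assoc]
    rfl

theorem exists_reduceModDet_phi_eq_step {q : Q} (hq : ∃ w, reduceModDet M₁ (phi w) = q) (a : Alph) :
    ∃ w, reduceModDet M₁ (phi w) = (schreierDFA M₁ M₂).step q a := by
  obtain ⟨w, rfl⟩ := hq
  exact ⟨w ++ invWord a, by rw [phi_append, map_mul]; rfl⟩

theorem mul_phi_schreierOut (hM₁ : M₁.det ≠ 0) {q : Q} (hq : ∃ w, reduceModDet M₁ (phi w) = q)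
    (a : Alph) :
    M₁ * phi (schreierOut M₁ M₂ q a) =
      cosetRep M₁ q * phi (invWord a) * (cosetRep M₁ ((schreierDFA M₁ M₂).step q a))⁻¹ * M₁ := by
  obtain ⟨w, hw⟩ := hq
  set r := cosetRep M₁ ((schreierDFA M₁ M₂).step q a)
  set s := cosetRep M₁ q * phi (invWord a) * r⁻¹
  have hr : IsUnit r := isUnit_cosetRep _
  have hs : IsUnit s := ((isUnit_cosetRep q).mul (isUnit_phi _)).mul (isUnit_nonsing_inv_iff.2 hr)
  have hsr : s * r = cosetRep M₁ q * phi (invWord a) := by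
    rw [mul_assoc _ r⁻¹, nonsing_inv_mul _ ((isUnit_iff_isUnit_det r).1 hr), mul_one]
  have hred : reduceModDet M₁ r = (schreierDFA M₁ M₂).step q a :=
    reduceModDet_cosetRep (exists_reduceModDet_phi_eq_step ⟨w, hw⟩ a)
  have hs1 : reduceModDet M₁ 1 = reduceModDet M₁ s := by
    rw [map_one, eq_comm, ← (hr.map (reduceModDet M₁)).mul_eq_right, ← map_mul, hsr, map_mul, hred,
      reduceModDet_cosetRep ⟨w, hw⟩]
    rfl
  exact chooseWord_spec
    (exists_isUnit_mul_eq_of_reduceModDet_eq hM₁ hs hs1 ⟨1, isUnit_one, by simp⟩)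

theorem mul_phi_transduce_schreierDFA (hM₁ : M₁.det ≠ 0) (u : List Alph) {q : Q}
    (hq : ∃ w, reduceModDet M₁ (phi w) = q)
    (hacc : (schreierDFA M₁ M₂).evalFrom q u ∈ (schreierDFA M₁ M₂).accept) :
    M₁ * phi (transduce (schreierDFA M₁ M₂) (schreierOut M₁ M₂) (schreierFin M₁ M₂) q u) =
      cosetRep M₁ q * phi (u.flatMap invWord) * M₂ := by
  induction u generalizing q with
  | nil =>
    rw [List.flatMap_nil, phi_nil, mul_one]
    exact chooseWord_spec hacc
  | cons a u ih =>
    have hr := (isUnit_iff_isUnit_det _).1 (isUnit_cosetRep ((schreierDFA M₁ M₂).step q a))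
    rw [transduce, phi_append, ← mul_assoc, mul_phi_schreierOut hM₁ hq, mul_assoc _ M₁,
      ih (exists_reduceModDet_phi_eq_step hq a) hacc]
    simp only [List.flatMap_cons, phi_append, mul_assoc, nonsing_inv_mul_cancel_left _ _ hr]

theorem cosetRep_one : cosetRep M₁ 1 = 1 := if_pos rfl

theorem mul_phi_transduce_schreierDFA_reverse (hM₁ : M₁.det ≠ 0) {w : List Alph}
    (hw : w.reverse ∈ (schreierDFA M₁ M₂).accepts) :
    M₁ * phi (transduce (schreierDFA M₁ M₂) (schreierOut M₁ M₂) (schreierFin M₁ M₂) 1 w.reverse) =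
      (phi w)⁻¹ * M₂ := by
  rw [mul_phi_transduce_schreierDFA hM₁ _ ⟨[], map_one _⟩ hw, cosetRep_one, one_mul,
    phi_flatMap_invWord_reverse]

theorem reverse_mem_schreierDFA_accepts (hM₁ : M₁.det ≠ 0) {w : List Alph}
    (h : ∃ Y, IsUnit Y ∧ M₁ * Y = (phi w)⁻¹ * M₂) : w.reverse ∈ (schreierDFA M₁ M₂).accepts := by
  have hrep := reduceModDet_cosetRep (M₁ := M₁) ⟨w.reverse.flatMap invWord, rfl⟩
  rw [phi_flatMap_invWord_reverse] at hrep
  change (schreierDFA M₁ M₂).evalFrom 1 w.reverse ∈ (schreierDFA M₁ M₂).accept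
  rw [schreierDFA_evalFrom, one_mul, phi_flatMap_invWord_reverse]
  exact exists_isUnit_mul_eq_of_reduceModDet_eq hM₁ (isUnit_cosetRep _) hrep.symm h

theorem phi_image_transduce_schreierDFA (hM₁ : M₁.det ≠ 0) (L : Language Alph) :
    phi '' (transduce (schreierDFA M₁ M₂) (schreierOut M₁ M₂) (schreierFin M₁ M₂) 1 ''
      (L.reverse ⊓ (schreierDFA M₁ M₂).accepts)) =
      {A | IsGL A ∧ ∃ A₁ ∈ phi '' L, A₁ * M₁ * A = M₂} := by
  ext A
  constructor
  · rintro ⟨_, ⟨u, ⟨hu, hacc⟩, rfl⟩, rfl⟩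
    rw [← List.reverse_reverse u] at hacc ⊢
    refine ⟨isGL_iff_isUnit.2 (isUnit_phi _), _, ⟨_, hu, rfl⟩, ?_⟩
    rw [mul_assoc, mul_phi_transduce_schreierDFA_reverse hM₁ hacc, ← mul_assoc,
      mul_nonsing_inv _ ((isUnit_iff_isUnit_det _).1 (isUnit_phi _)), one_mul]
  · rintro ⟨hA, _, ⟨w, hw, rfl⟩, hwA⟩
    have hA' : M₁ * A = (phi w)⁻¹ * M₂ := by
      rw [← hwA, ← mul_assoc, ← mul_assoc,
        nonsing_inv_mul _ ((isUnit_iff_isUnit_det _).1 (isUnit_phi _)), one_mul]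
    have hacc := reverse_mem_schreierDFA_accepts hM₁ ⟨A, isGL_iff_isUnit.1 hA, hA'⟩
    refine ⟨_, ⟨w.reverse, ⟨Language.mem_reverse.2 (by rwa [List.reverse_reverse]), hacc⟩, rfl⟩, ?_⟩
    exact mul_left_cancel_of_det_ne_zero hM₁
      ((mul_phi_transduce_schreierDFA_reverse hM₁ hacc).trans hA'.symm)

end Schreier

theorem solutions_regular_one_matrix_general (M₁ M₂ : M2) (h₁ : M₁.det ≠ 0)
    (S₁ : Set M2) (hS₁ : RegularSubset S₁) :
    RegularSubset {A : M2 | IsGL A ∧ ∃ A₁ ∈ S₁, A₁ * M₁ * A = M₂} := by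
  obtain ⟨L, hL, rfl⟩ := hS₁
  have : NeZero M₁.det.natAbs := ⟨Int.natAbs_ne_zero.2 h₁⟩
  exact ⟨_, (hL.reverse.inf ⟨_, inferInstance, schreierDFA M₁ M₂, rfl⟩).image_transduce _ _ _ _,
    phi_image_transduce_schreierDFA h₁ L⟩

/-- For nonsingular `M₁, M₂` and a regular subset `𝒮₁ ⊆ GL(2,ℤ)`, the set of `A ∈ GL(2,ℤ)`
such that `A₁ · M₁ · A = M₂` for some `A₁ ∈ 𝒮₁` is a regular subset of GL(2,ℤ). -/
theorem solutions_regular_one_matrix (M₁ M₂ : M2) (h₁ : M₁.det ≠ 0) (h₂ : M₂.det ≠ 0)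
    (S₁ : Set M2) (hS₁ : RegularSubset S₁) :
    RegularSubset {A : M2 | IsGL A ∧ ∃ A₁ ∈ S₁, A₁ * M₁ * A = M₂} :=
  solutions_regular_one_matrix_general M₁ M₂ h₁ S₁ hS₁
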